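/- Let Z → M → B be a smooth fiber bundle with a chosen horizontal distribution (connection on the fibration), and let (E, ∇) be a vector bundle with connection on M. Define the pushforward connection π_*∇ on the infinite rank bundle 𝓔 = π_*E by (π_*∇)_X s'(m) = ∇_{X^h} s̃(m), where X^h is the horizontal lift of X. Then the curvature Ω' of π_*∇ satisfies Ω'(X,Y) = Ω(X^h,Y^h) + (∇_{[X^h,Y^h]} − ∇_{[X,Y]^h}), where Ω is the curvature of ∇. In particular, Ω'(X,Y) acts as a zeroth order (multiplication) operator Ω(X^h,Y^h) on fibers if and only if the horizontal distribution is integrable, i.e., [X,Y]^h = [X^h,Y^h] for all vector fields X,Y on B. -/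
import Mathlib


/-- For a fibration `Z → M → B` with a chosen horizontal distribution
(horizontal lift `h` of vector fields) and a vector bundle with connection `(E, ∇)` on `M`,
the pushforward connection `π_*∇` on `𝓔 = π_*E`, defined by `(π_*∇)_X s = ∇_{X^h} s̃`,
has curvature `Ω'(X,Y) = Ω(X^h,Y^h) + (∇_{[X^h,Y^h]} − ∇_{[X,Y]^h})`.  In particular
`Ω'(X,Y)` is the zeroth order (multiplication) operator `Ω(X^h,Y^h)` for all `X, Y`
iff the horizontal distribution is integrable, i.e. `[X,Y]^h = [X^h,Y^h]`.
Vector fields on `B` and `M` are modeled by Lie rings `VB`, `VM` acting on the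
space of sections `S`; curvature is `Ω(X,Y) = ∇_X∇_Y − ∇_Y∇_X − ∇_{[X,Y]}`. -/
theorem stmt0
    {VB VM S : Type*} [LieRing VB] [LieRing VM] [AddCommGroup S]
    (h : VB →+ VM)                      -- horizontal lift X ↦ X^h
    (nabla : VM → S → S)                -- the connection ∇ on E
    (pnabla : VB → S → S)               -- the pushforward connection π_*∇ on 𝓔
    (hp : ∀ X s, pnabla X s = nabla (h X) s)
    (Om : VM → VM → S → S) (Om' : VB → VB → S → S)
    (hOm : ∀ X Y s, Om X Y s =
      nabla X (nabla Y s) - nabla Y (nabla X s) - nabla ⁅X, Y⁆ s)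
    (hOm' : ∀ X Y s, Om' X Y s =
      pnabla X (pnabla Y s) - pnabla Y (pnabla X s) - pnabla ⁅X, Y⁆ s)
    -- a connection is determined by its direction argument
    (hfaithful : ∀ Z W : VM, (∀ s, nabla Z s = nabla W s) → Z = W) :
    (∀ X Y s, Om' X Y s =
      Om (h X) (h Y) s + (nabla ⁅h X, h Y⁆ s - nabla (h ⁅X, Y⁆) s))
    ∧ ((∀ X Y s, Om' X Y s = Om (h X) (h Y) s)
        ↔ ∀ X Y : VB, ⁅h X, h Y⁆ = h ⁅X, Y⁆) := by
  have key : ∀ X Y s, Om' X Y s =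
      Om (h X) (h Y) s + (nabla ⁅h X, h Y⁆ s - nabla (h ⁅X, Y⁆) s) := by
    intro X Y s
    simp only [hOm', hp, hOm]
    abel
  refine ⟨key, ?_, ?_⟩
  · intro hall X Y
    apply hfaithful
    intro s
    have := key X Y s
    rw [hall X Y s] at this
    have h2 : nabla ⁅h X, h Y⁆ s - nabla (h ⁅X, Y⁆) s = 0 :=
      left_eq_add.mp this
    exact sub_eq_zero.mp h2
  · intro hi X Y s
    rw [key, hi]
    abel
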